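/- Let φ : Σ* → [0,1] admit a linear representation ⟨ξ, (P(c))_{c∈Σ}, η⟩ in which ‖ξ‖ = 1, each P(c) is a projector, and η ≠ 0. Suppose there are λ and δ > 0 with |φ(w) − λ| ≥ δ for all w ∈ Σ*, and set L := {w ∈ Σ* : φ(w) > λ}. Then L is a regular language; moreover, writing P(w₁⋯w_n) := P(w₁)⋯P(w_n), there exists a deterministic finite automaton ⟨Σ, Q, δ̂, q₀, F⟩ recognizing L such that for all words w, u ∈ Σ*: if δ̂(q₀, w) ≠ δ̂(q₀, u) then ‖ξP(w) − ξP(u)‖ ≥ δ/‖η‖. -/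

import Mathlib

/-!
Every `P c` is an orthogonal projector, so right multiplication by `P(v)` does not increase the
Euclidean norm, and `|φ(wv) − φ(uv)| ≤ ‖ξP(w) − ξP(u)‖ ‖η‖`. If `w` and `u` have different left
quotients with respect to `L`, some suffix `v` puts exactly one of `wv`, `uv` into `L`, and as
`λ` is `δ`-isolated from the values of `φ` this forces `|φ(wv) − φ(uv)| ≥ 2δ`. So the vectors
`ξP(w)` attached to distinct left quotients are `δ/‖η‖`-separated points of the ball of radius
`‖ξ‖`; there are finitely many of them, and the Myhill–Nerode automaton `L.toDFA` has all the
required properties.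
-/

open Matrix

/-- The Euclidean norm `‖v‖₂ = √(∑ᵢ |vᵢ|²)` of a complex row vector. -/
noncomputable def rowNorm {N : ℕ} (v : Matrix (Fin 1) (Fin N) ℂ) : ℝ :=
  Real.sqrt (∑ i, Complex.normSq (v 0 i))

section RowVector

variable {N : ℕ}

lemma rowNorm_nonneg (v : Matrix (Fin 1) (Fin N) ℂ) : 0 ≤ rowNorm v :=
  Real.sqrt_nonneg _

lemma rowNorm_eq_norm (v : Matrix (Fin 1) (Fin N) ℂ) :
    rowNorm v = ‖(WithLp.toLp 2 (v 0) : EuclideanSpace ℂ (Fin N))‖ := by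
  simp [rowNorm, EuclideanSpace.norm_eq, Complex.normSq_eq_norm_sq]

lemma rowNorm_sub_eq_dist (x y : Matrix (Fin 1) (Fin N) ℂ) :
    rowNorm (x - y) =
      dist (WithLp.toLp 2 (x 0) : EuclideanSpace ℂ (Fin N)) (WithLp.toLp 2 (y 0)) := by
  rw [dist_eq_norm, ← WithLp.toLp_sub, rowNorm_eq_norm]
  rfl

lemma rowNorm_pos {η : Matrix (Fin 1) (Fin N) ℂ} (hη : η ≠ 0) : 0 < rowNorm η := by
  rw [rowNorm_eq_norm, norm_pos_iff]
  contrapose! hη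
  ext i j
  simpa [Subsingleton.elim i 0] using congrFun (congrArg WithLp.ofLp hη) j

lemma mul_conjTranspose_apply_eq_inner (x y : Matrix (Fin 1) (Fin N) ℂ) :
    (x * yᴴ) 0 0 =
      inner ℂ (WithLp.toLp 2 (y 0) : EuclideanSpace ℂ (Fin N)) (WithLp.toLp 2 (x 0)) := by
  simp [Matrix.mul_apply, EuclideanSpace.inner_toLp_toLp, dotProduct]

lemma ofReal_rowNorm_sq (x : Matrix (Fin 1) (Fin N) ℂ) :
    ((rowNorm x ^ 2 : ℝ) : ℂ) = (x * xᴴ) 0 0 := by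
  rw [mul_conjTranspose_apply_eq_inner, inner_self_eq_norm_sq_to_K, rowNorm_eq_norm]
  push_cast
  rfl

lemma norm_mul_conjTranspose_apply_le (x y : Matrix (Fin 1) (Fin N) ℂ) :
    ‖(x * yᴴ) 0 0‖ ≤ rowNorm x * rowNorm y := by
  rw [mul_conjTranspose_apply_eq_inner, rowNorm_eq_norm, rowNorm_eq_norm, mul_comm]
  exact norm_inner_le_norm _ _

lemma norm_mul_transpose_apply_le (x y : Matrix (Fin 1) (Fin N) ℂ) :
    ‖(x * yᵀ) 0 0‖ ≤ rowNorm x * rowNorm y := by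
  have h := norm_mul_conjTranspose_apply_le x (y.map star)
  have hy : (y.map star)ᴴ = yᵀ := by ext; simp
  rwa [hy, show rowNorm (y.map star) = rowNorm y by simp [rowNorm]] at h

lemma rowNorm_mul_le_of_isHermitian_of_isIdempotentElem (x : Matrix (Fin 1) (Fin N) ℂ)
    {P : Matrix (Fin N) (Fin N) ℂ} (hH : P.IsHermitian) (hI : IsIdempotentElem P) :
    rowNorm (x * P) ≤ rowNorm x := by
  -- `P Pᴴ = P` turns `‖xP‖²` into `⟨x, xP⟩`, to which Cauchy–Schwarz applies.
  have hPP : x * P * (x * P)ᴴ = x * P * xᴴ := by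
    rw [conjTranspose_mul, hH.eq, ← Matrix.mul_assoc, Matrix.mul_assoc x, hI.eq]
  have hsq : rowNorm (x * P) ^ 2 ≤ rowNorm (x * P) * rowNorm x :=
    calc rowNorm (x * P) ^ 2 = ‖(x * P * (x * P)ᴴ) 0 0‖ := by
          rw [← ofReal_rowNorm_sq, Complex.norm_real, Real.norm_of_nonneg (sq_nonneg _)]
      _ ≤ rowNorm (x * P) * rowNorm x := hPP ▸ norm_mul_conjTranspose_apply_le _ _
  nlinarith [rowNorm_nonneg (x * P), rowNorm_nonneg x]

end RowVector

lemma finite_of_pairwise_le_dist {ι E : Type*} [MetricSpace E] [ProperSpace E] {g : ι → E}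
    (hg : Bornology.IsBounded (Set.range g)) {ε : ℝ} (hε : 0 < ε)
    (hsep : Pairwise fun i j => ε ≤ dist (g i) (g j)) : Finite ι := by
  let _ : TopologicalSpace ι := ⊥
  have _ : DiscreteTopology ι := ⟨rfl⟩
  have he := Metric.isClosedEmbedding_of_pairwise_le_dist hε hsep
  have : CompactSpace ι := by
    rw [← isCompact_univ_iff]
    simpa using
      he.isCompact_preimage (Metric.isCompact_of_isClosed_isBounded he.isClosed_range hg)
  exact finite_of_compact_of_discrete

namespace Language

variable {α : Type*} (L : Language α)

lemma toDFA_eval (w : List α) : (L.toDFA.eval w).val = L.leftQuotient w := by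
  induction w using List.reverseRecOn with
  | nil => rfl
  | append_singleton w a ih => simp [ih, leftQuotient_append]

lemma finite_range_leftQuotient_of_separated {E : Type*} [MetricSpace E] [ProperSpace E]
    (f : List α → E) (hf : Bornology.IsBounded (Set.range f)) {ε : ℝ} (hε : 0 < ε)
    (hsep : ∀ w u, L.leftQuotient w ≠ L.leftQuotient u → ε ≤ dist (f w) (f u)) :
    (Set.range L.leftQuotient).Finite := by
  choose rep hrep using fun q : Set.range L.leftQuotient => q.2
  have : Finite (Set.range L.leftQuotient) := by
    refine finite_of_pairwise_le_dist (hf.subset (Set.range_comp_subset_range rep f)) hε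
      fun q q' hne => hsep _ _ ?_
    rwa [hrep, hrep, Ne, ← Subtype.ext_iff]
  exact Set.toFinite _

end Language

lemma two_mul_le_abs_sub_of_not_lt_iff {a b lam δ : ℝ} (ha : δ ≤ |a - lam|)
    (hb : δ ≤ |b - lam|) (h : ¬ (lam < a ↔ lam < b)) : 2 * δ ≤ |a - b| := by
  grind

section LinearRepresentation

variable {σ : Type*} {N : ℕ} {ξ η : Matrix (Fin 1) (Fin N) ℂ}
  {P : σ → Matrix (Fin N) (Fin N) ℂ} {φ : List σ → ℝ}

lemma rowNorm_mul_prod_le (hP : ∀ c, (P c).IsHermitian ∧ IsIdempotentElem (P c))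
    (x : Matrix (Fin 1) (Fin N) ℂ) (w : List σ) : rowNorm (x * (w.map P).prod) ≤ rowNorm x := by
  induction w generalizing x with
  | nil => simp
  | cons c w ih =>
    rw [List.map_cons, List.prod_cons, ← Matrix.mul_assoc]
    exact (ih _).trans (rowNorm_mul_le_of_isHermitian_of_isIdempotentElem x (hP c).1 (hP c).2)

lemma abs_sub_append_le_rowNorm_mul (hP : ∀ c, (P c).IsHermitian ∧ IsIdempotentElem (P c))
    (hrep : ∀ w : List σ, (ξ * (w.map P).prod * η.transpose) 0 0 = (φ w : ℂ))
    (w u v : List σ) :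
    |φ (w ++ v) - φ (u ++ v)| ≤
      rowNorm (ξ * (w.map P).prod - ξ * (u.map P).prod) * rowNorm η := by
  set d := ξ * (w.map P).prod - ξ * (u.map P).prod
  have hd : ((φ (w ++ v) - φ (u ++ v) : ℝ) : ℂ) = (d * (v.map P).prod * ηᵀ) 0 0 := by
    simp only [d, Complex.ofReal_sub, ← hrep, List.map_append, List.prod_append,
      Matrix.sub_mul, Matrix.mul_assoc, Matrix.sub_apply]
  calc |φ (w ++ v) - φ (u ++ v)| = ‖(d * (v.map P).prod * ηᵀ) 0 0‖ := by
        rw [← hd, Complex.norm_real, Real.norm_eq_abs]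
    _ ≤ rowNorm (d * (v.map P).prod) * rowNorm η := norm_mul_transpose_apply_le _ _
    _ ≤ rowNorm d * rowNorm η :=
        mul_le_mul_of_nonneg_right (rowNorm_mul_prod_le hP d v) (rowNorm_nonneg η)

lemma two_mul_le_rowNorm_mul_of_leftQuotient_ne
    (hP : ∀ c, (P c).IsHermitian ∧ IsIdempotentElem (P c))
    (hrep : ∀ w : List σ, (ξ * (w.map P).prod * η.transpose) 0 0 = (φ w : ℂ))
    {lam δ : ℝ} (hiso : ∀ w, δ ≤ |φ w - lam|) {w u : List σ}
    (hne : Language.leftQuotient {w | lam < φ w} w ≠ Language.leftQuotient {w | lam < φ w} u) :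
    2 * δ ≤ rowNorm (ξ * (w.map P).prod - ξ * (u.map P).prod) * rowNorm η := by
  obtain ⟨v, hv⟩ : ∃ v, ¬ (lam < φ (w ++ v) ↔ lam < φ (u ++ v)) := by
    contrapose! hne
    ext v
    exact hne v
  exact (two_mul_le_abs_sub_of_not_lt_iff (hiso _) (hiso _) hv).trans
    (abs_sub_append_le_rowNorm_mul hP hrep w u v)

end LinearRepresentation

theorem regular_of_projector_linear_representation_general
    (σ : Type)
    (N : ℕ) (ξ η : Matrix (Fin 1) (Fin N) ℂ) (P : σ → Matrix (Fin N) (Fin N) ℂ)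
    (φ : List σ → ℝ)
    (hproj : ∀ c, (P c)ᴴ = P c ∧ P c * P c = P c)
    (hη : η ≠ 0)
    (hrep : ∀ w : List σ, (ξ * (w.map P).prod * η.transpose) 0 0 = (φ w : ℂ))
    (lam δ : ℝ) (hδ : 0 < δ) (hiso : ∀ w, |φ w - lam| ≥ δ)
    (L : Set (List σ)) (hL : L = {w | φ w > lam}) :
    (∃ (Q : Type) (_ : Fintype Q) (M : DFA σ Q), ∀ w, w ∈ M.accepts ↔ w ∈ L) ∧
    (∃ (Q : Type) (_ : Fintype Q) (M : DFA σ Q),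
      (∀ w, w ∈ M.accepts ↔ w ∈ L) ∧
      ∀ w u : List σ, M.eval w ≠ M.eval u →
        rowNorm (ξ * (w.map P).prod - ξ * (u.map P).prod) ≥ δ / rowNorm η) := by
  subst hL
  set L : Language σ := {w | lam < φ w}
  have hη₀ := rowNorm_pos hη
  have hsep : ∀ w u, L.leftQuotient w ≠ L.leftQuotient u →
      δ / rowNorm η ≤ rowNorm (ξ * (w.map P).prod - ξ * (u.map P).prod) := fun w u hne => by
    rw [div_le_iff₀ hη₀]
    linarith [two_mul_le_rowNorm_mul_of_leftQuotient_ne hproj hrep hiso hne]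
  let state (w : List σ) : EuclideanSpace ℂ (Fin N) := WithLp.toLp 2 ((ξ * (w.map P).prod) 0)
  have hbdd : Bornology.IsBounded (Set.range state) := by
    refine isBounded_iff_forall_norm_le.2 ⟨rowNorm ξ, ?_⟩
    rintro _ ⟨w, rfl⟩
    exact rowNorm_eq_norm _ ▸ rowNorm_mul_prod_le hproj ξ w
  have : Fintype (Set.range L.leftQuotient) :=
    (L.finite_range_leftQuotient_of_separated state hbdd (div_pos hδ hη₀) fun w u hne =>
      rowNorm_sub_eq_dist _ _ ▸ hsep w u hne).fintype
  have hacc : ∀ w, w ∈ L.toDFA.accepts ↔ w ∈ L := by simp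
  refine ⟨⟨_, inferInstance, L.toDFA, hacc⟩, _, inferInstance, L.toDFA, hacc,
    fun w u hne => hsep w u ?_⟩
  rwa [Ne, Subtype.ext_iff, L.toDFA_eval, L.toDFA_eval] at hne

/-- Let `φ : Σ* → [0,1]` admit a linear representation
`⟨ξ, (P(c))_{c∈Σ}, η⟩` with `‖ξ‖ = 1`, each `P(c)` a projector (Hermitian idempotent)
and `η ≠ 0`.  If there are `λ` and `δ > 0` with `|φ(w) − λ| ≥ δ` for all `w`, then
`L := {w : φ(w) > λ}` is a regular language; moreover there is a DFA recognizing `L`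
such that words `w, u` driving it to different states satisfy
`‖ξP(w) − ξP(u)‖ ≥ δ/‖η‖` (where `P(w₁⋯w_n) = P(w₁)⋯P(w_n)`). -/
theorem regular_of_projector_linear_representation
    (σ : Type) [Fintype σ] [Nonempty σ]
    (N : ℕ) (ξ η : Matrix (Fin 1) (Fin N) ℂ) (P : σ → Matrix (Fin N) (Fin N) ℂ)
    (φ : List σ → ℝ)
    (hrange : ∀ w, 0 ≤ φ w ∧ φ w ≤ 1)
    (hξ : ∑ i, Complex.normSq (ξ 0 i) = 1)
    (hproj : ∀ c, (P c)ᴴ = P c ∧ P c * P c = P c)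
    (hη : η ≠ 0)
    (hrep : ∀ w : List σ, (ξ * (w.map P).prod * η.transpose) 0 0 = (φ w : ℂ))
    (lam δ : ℝ) (hδ : 0 < δ) (hiso : ∀ w, |φ w - lam| ≥ δ)
    (L : Set (List σ)) (hL : L = {w | φ w > lam}) :
    (∃ (Q : Type) (_ : Fintype Q) (M : DFA σ Q), ∀ w, w ∈ M.accepts ↔ w ∈ L) ∧
    (∃ (Q : Type) (_ : Fintype Q) (M : DFA σ Q),
      (∀ w, w ∈ M.accepts ↔ w ∈ L) ∧
      ∀ w u : List σ, M.eval w ≠ M.eval u →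
        rowNorm (ξ * (w.map P).prod - ξ * (u.map P).prod) ≥ δ / rowNorm η) :=
  regular_of_projector_linear_representation_general σ N ξ η P φ hproj hη hrep lam δ hδ hiso L hL
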